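/- Let t > 0 and let g be the automorphism of B^m ⊂ ℂ^m given by g(z) = (cosh(t)z₁ + sinh(t), Uz')/(sinh(t)z₁ + cosh(t)) where U ∈ U(m−1) is unitary and z = (z₁, z'). If z = (c, z') with |c| < 1 and z' ≠ 0, ‖z‖ ≤ 1, then lim_{n→∞} (1/n) log ‖gⁿ(z) − e₁‖ = −t. -/

import Mathlib

/-! Up to the unitary factor the maps `gT t U` form a one-parameter group,
`gT s V ∘ gT t U = gT (s + t) (V * U)` (a Möbius composition in the first coordinate, `a_t`
commuting with `k`), so `gⁿ = gT (n t) (Uⁿ)`. For `V` unitary and `z = (c, z')`,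
`‖gT s V z - e₁‖ = √(e^{-2s} |c - 1|² + ‖z'‖²) / |c sinh s + cosh s|`, and
`e^{-s} (c sinh s + cosh s) → (c + 1) / 2`. Hence
`e^{nt} ‖gⁿ z - e₁‖ → 2 ‖z'‖ / |c + 1|`, a positive limit because `z' ≠ 0` and `c ≠ -1`,
and taking logarithms gives the rate `-t`. -/

open Metric Filter Matrix

noncomputable section

/-- The automorphism `g = a_t ∘ k` of the unit ball in `ℂ^{m+1}`, where
`k(z₁, z') = (z₁, U z')` and `a_t(z) = (cosh(t) z₁ + sinh(t), z₂, …) / (sinh(t) z₁ + cosh(t))`;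
explicitly `g(z₁, z') = (cosh(t) z₁ + sinh(t), U z') / (sinh(t) z₁ + cosh(t))`. -/
def gT {m : ℕ} (t : ℝ) (U : Matrix (Fin m) (Fin m) ℂ)
    (z : EuclideanSpace ℂ (Fin (m+1))) : EuclideanSpace ℂ (Fin (m+1)) :=
  WithLp.toLp 2 (fun i : Fin (m+1) => (if h : i = 0 then (Real.cosh t : ℂ) * z 0 + Real.sinh t
      else ∑ k : Fin m, U (i.pred h) k * z k.succ) /
    ((Real.sinh t : ℂ) * z 0 + Real.cosh t))

open Topology

section

variable {m : ℕ} (t : ℝ) (U : Matrix (Fin m) (Fin m) ℂ) (z : EuclideanSpace ℂ (Fin (m+1)))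

theorem gT_apply_zero :
    gT t U z 0 = (Real.cosh t * z 0 + Real.sinh t) / (Real.sinh t * z 0 + Real.cosh t) := rfl

theorem gT_apply_succ (j : Fin m) :
    gT t U z j.succ = (U *ᵥ fun k => z k.succ) j / (Real.sinh t * z 0 + Real.cosh t) := by
  simp [gT, mulVec, dotProduct]

end

theorem abs_sinh_lt_cosh (s : ℝ) : |Real.sinh s| < Real.cosh s :=
  abs_lt.mpr ⟨by linarith [Real.sinh_lt_cosh (-s), Real.sinh_neg s, Real.cosh_neg s],
    Real.sinh_lt_cosh s⟩

theorem sinh_mul_add_cosh_ne_zero (s : ℝ) {c : ℂ} (hc : ‖c‖ ≤ 1) :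
    (Real.sinh s : ℂ) * c + Real.cosh s ≠ 0 := by
  intro h
  have : ‖(Real.sinh s : ℂ) * c‖ < ‖(Real.cosh s : ℂ)‖ := by
    rw [norm_mul, Complex.norm_real, Complex.norm_real, Real.norm_eq_abs, Real.norm_eq_abs,
      abs_of_pos (Real.cosh_pos s)]
    exact (mul_le_of_le_one_right (abs_nonneg _) hc).trans_lt (abs_sinh_lt_cosh s)
  rw [eq_neg_of_add_eq_zero_left h, norm_neg] at this
  exact this.false

theorem gT_gT {m : ℕ} (s t : ℝ) (V U : Matrix (Fin m) (Fin m) ℂ)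
    {z : EuclideanSpace ℂ (Fin (m+1))} (hz : ‖z 0‖ ≤ 1) :
    gT s V (gT t U z) = gT (s + t) (V * U) z := by
  have hD := sinh_mul_add_cosh_ne_zero t hz
  have hnum : (Real.cosh s : ℂ) * gT t U z 0 + Real.sinh s
      = (Real.cosh (s + t) * z 0 + Real.sinh (s + t)) / (Real.sinh t * z 0 + Real.cosh t) := by
    rw [gT_apply_zero, eq_div_iff hD, add_mul, mul_assoc, div_mul_cancel₀ _ hD]
    push_cast [Real.sinh_add, Real.cosh_add]
    ring
  have hden : (Real.sinh s : ℂ) * gT t U z 0 + Real.cosh s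
      = (Real.sinh (s + t) * z 0 + Real.cosh (s + t)) / (Real.sinh t * z 0 + Real.cosh t) := by
    rw [gT_apply_zero, eq_div_iff hD, add_mul, mul_assoc, div_mul_cancel₀ _ hD]
    push_cast [Real.sinh_add, Real.cosh_add]
    ring
  ext i
  refine Fin.cases ?_ (fun j => ?_) i
  · rw [gT_apply_zero s, hnum, hden, div_div_div_cancel_right₀ hD, gT_apply_zero]
  · rw [gT_apply_succ s, hden, gT_apply_succ, ← mulVec_mulVec]
    have hdiv : (fun k => gT t U z k.succ)
        = (Real.sinh t * z 0 + Real.cosh t : ℂ)⁻¹ • (U *ᵥ fun k => z k.succ) := by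
      ext k
      rw [gT_apply_succ, Pi.smul_apply, smul_eq_mul, div_eq_inv_mul]
    rw [hdiv, mulVec_smul, Pi.smul_apply, smul_eq_mul, div_div_eq_mul_div, inv_mul_eq_div,
      div_mul_cancel₀ _ hD]

theorem gT_zero_one {m : ℕ} (z : EuclideanSpace ℂ (Fin (m+1))) : gT 0 1 z = z := by
  ext i
  refine Fin.cases ?_ (fun j => ?_) i
  · simp [gT_apply_zero]
  · simp [gT_apply_succ]

theorem gT_iterate {m : ℕ} (t : ℝ) (U : Matrix (Fin m) (Fin m) ℂ)
    {z : EuclideanSpace ℂ (Fin (m+1))} (hz : ‖z 0‖ ≤ 1) (n : ℕ) :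
    (gT t U)^[n] z = gT (n * t) (U ^ n) z := by
  induction n with
  | zero => simp [gT_zero_one]
  | succ n ih =>
    rw [Function.iterate_succ_apply', ih, gT_gT _ _ _ _ hz, pow_succ']
    push_cast
    ring_nf

theorem sum_norm_mulVec_sq_of_mem_unitaryGroup {𝕜 n : Type*} [RCLike 𝕜] [Fintype n]
    [DecidableEq n] {V : Matrix n n 𝕜} (hV : V ∈ unitaryGroup n 𝕜) (v : n → 𝕜) :
    ∑ i, ‖(V *ᵥ v) i‖ ^ 2 = ∑ i, ‖v i‖ ^ 2 := by
  have h := ContinuousLinearMap.norm_map_of_mem_unitary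
    (Unitary.map_mem (toEuclideanCLM (n := n) (𝕜 := 𝕜)) hV) (WithLp.toLp 2 v)
  rw [toEuclideanCLM_toLp] at h
  calc ∑ i, ‖(V *ᵥ v) i‖ ^ 2 = ‖(WithLp.toLp 2 (V *ᵥ v) : EuclideanSpace 𝕜 n)‖ ^ 2 := by
        rw [EuclideanSpace.norm_sq_eq]
    _ = ‖(WithLp.toLp 2 v : EuclideanSpace 𝕜 n)‖ ^ 2 := by rw [h]
    _ = ∑ i, ‖v i‖ ^ 2 := by rw [EuclideanSpace.norm_sq_eq]

section

variable {m : ℕ} (t : ℝ) (V : Matrix (Fin m) (Fin m) ℂ) {z : EuclideanSpace ℂ (Fin (m+1))}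

theorem gT_apply_zero_sub_one (hz : ‖z 0‖ ≤ 1) :
    gT t V z 0 - 1 = Real.exp (-t) * (z 0 - 1) / (Real.sinh t * z 0 + Real.cosh t) := by
  rw [gT_apply_zero, div_sub_one (sinh_mul_add_cosh_ne_zero t hz), ← Real.cosh_sub_sinh]
  push_cast
  ring

theorem norm_gT_sub_single (hV : V ∈ unitaryGroup (Fin m) ℂ) (hz : ‖z 0‖ ≤ 1) :
    ‖gT t V z - EuclideanSpace.single 0 (1 : ℂ)‖
      = √(Real.exp (-t) ^ 2 * ‖z 0 - 1‖ ^ 2 + ∑ j : Fin m, ‖z j.succ‖ ^ 2)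
          / ‖(Real.sinh t : ℂ) * z 0 + Real.cosh t‖ := by
  have hD := norm_pos_iff.mpr (sinh_mul_add_cosh_ne_zero t hz)
  have hsq : ‖gT t V z - EuclideanSpace.single 0 (1 : ℂ)‖ ^ 2
        * ‖(Real.sinh t : ℂ) * z 0 + Real.cosh t‖ ^ 2
      = Real.exp (-t) ^ 2 * ‖z 0 - 1‖ ^ 2 + ∑ j : Fin m, ‖z j.succ‖ ^ 2 := by
    rw [EuclideanSpace.norm_sq_eq, Fin.sum_univ_succ]
    simp only [PiLp.sub_apply, PiLp.single_apply, if_pos, if_neg (Fin.succ_ne_zero _), sub_zero,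
      gT_apply_zero_sub_one t V hz, gT_apply_succ, norm_div, norm_mul, div_pow, mul_pow,
      ← Finset.sum_div, sum_norm_mulVec_sq_of_mem_unitaryGroup hV, Complex.norm_real,
      Real.norm_eq_abs, abs_of_pos (Real.exp_pos _)]
    rw [← add_div, div_mul_cancel₀ _ (pow_ne_zero 2 hD.ne')]
  rw [eq_div_iff hD.ne', ← hsq, ← mul_pow, Real.sqrt_sq (by positivity)]

end

theorem tendsto_exp_neg_mul_sinh_mul_add_cosh (c : ℂ) :
    Tendsto (fun s : ℝ => (Real.exp (-s) : ℂ) * (Real.sinh s * c + Real.cosh s)) atTop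
      (𝓝 ((c + 1) / 2)) := by
  have hu : Tendsto (fun s : ℝ => (Real.exp (-s) : ℂ)) atTop (𝓝 0) :=
    (Complex.continuous_ofReal.tendsto' 0 0 Complex.ofReal_zero).comp
      Real.tendsto_exp_neg_atTop_nhds_zero
  have key : ∀ s : ℝ, (Real.exp (-s) : ℂ) * (Real.sinh s * c + Real.cosh s)
      = ((1 - (Real.exp (-s) : ℂ) ^ 2) * c + 1 + (Real.exp (-s) : ℂ) ^ 2) / 2 := by
    intro s
    have h : Complex.exp (-s) * Complex.exp s = 1 := by
      rw [← Complex.exp_add, neg_add_cancel, Complex.exp_zero]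
    rw [Real.sinh_eq, Real.cosh_eq]
    push_cast
    linear_combination (c + 1) / 2 * h
  have hcont : Continuous (fun u : ℂ => ((1 - u ^ 2) * c + 1 + u ^ 2) / 2) := by fun_prop
  exact ((hcont.tendsto' 0 _ (by ring)).comp hu).congr fun s => (key s).symm

theorem tendsto_one_div_mul_log_of_tendsto_mul_exp {f : ℕ → ℝ} {a L : ℝ} (hL : 0 < L)
    (hf : Tendsto (fun n : ℕ => f n * Real.exp (n * a)) atTop (𝓝 L)) :
    Tendsto (fun n : ℕ => 1 / (n : ℝ) * Real.log (f n)) atTop (𝓝 (-a)) := by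
  have hlog : Tendsto (fun n : ℕ => 1 / (n : ℝ) * Real.log (f n * Real.exp (n * a)) - a) atTop
      (𝓝 (0 * Real.log L - a)) :=
    (tendsto_one_div_atTop_nhds_zero_nat.mul (hf.log hL.ne')).sub_const a
  rw [zero_mul, zero_sub] at hlog
  refine hlog.congr' ?_
  filter_upwards [hf.eventually (lt_mem_nhds hL), eventually_ne_atTop 0] with n hpos hn
  have hfn : 0 < f n := pos_of_mul_pos_left hpos (Real.exp_pos _).le
  rw [Real.log_mul hfn.ne' (Real.exp_pos _).ne', Real.log_exp]
  field_simp
  ring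

/-- The unitary factor may vary along the filter, as `Uⁿ` does along an orbit. -/
theorem tendsto_norm_gT_sub_single_mul_exp {m : ℕ} {ι : Type*} {l : Filter ι} {s : ι → ℝ}
    (hs : Tendsto s l atTop) {V : ι → Matrix (Fin m) (Fin m) ℂ}
    (hV : ∀ i, V i ∈ unitaryGroup (Fin m) ℂ) {z : EuclideanSpace ℂ (Fin (m+1))}
    (hz : ‖z 0‖ ≤ 1) (hz₀ : z 0 + 1 ≠ 0) :
    Tendsto (fun i => ‖gT (s i) (V i) z - EuclideanSpace.single 0 (1 : ℂ)‖ * Real.exp (s i)) l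
      (𝓝 (√(∑ j : Fin m, ‖z j.succ‖ ^ 2) / ‖(z 0 + 1) / 2‖)) := by
  have hnum : Tendsto
      (fun s : ℝ => √(Real.exp (-s) ^ 2 * ‖z 0 - 1‖ ^ 2 + ∑ j : Fin m, ‖z j.succ‖ ^ 2)) atTop
      (𝓝 √(∑ j : Fin m, ‖z j.succ‖ ^ 2)) := by
    have := ((Real.tendsto_exp_neg_atTop_nhds_zero.pow 2).mul_const (‖z 0 - 1‖ ^ 2)).add_const
      (∑ j : Fin m, ‖z j.succ‖ ^ 2)
    simpa using this.sqrt
  have hden := (tendsto_exp_neg_mul_sinh_mul_add_cosh (z 0)).norm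
  refine ((hnum.div hden (by simpa using hz₀)).comp hs).congr fun i => ?_
  rw [Function.comp_apply, Pi.div_apply, norm_gT_sub_single _ _ (hV i) hz, norm_mul,
    Complex.norm_real, Real.norm_of_nonneg (Real.exp_pos _).le, Real.exp_neg]
  field_simp

theorem stmt7_general {m : ℕ} (t : ℝ) (ht : 0 < t)
    (U : Matrix (Fin m) (Fin m) ℂ) (hU : U ∈ Matrix.unitaryGroup (Fin m) ℂ)
    (z : EuclideanSpace ℂ (Fin (m+1)))
    (hc : ‖z 0‖ < 1) (hz' : ∃ j : Fin m, z j.succ ≠ 0) :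
    Tendsto (fun n : ℕ => (1 / (n : ℝ)) *
        Real.log ‖(gT t U)^[n] z - EuclideanSpace.single 0 (1 : ℂ)‖)
      atTop (nhds (-t)) := by
  obtain ⟨j, hj⟩ := hz'
  have hK : 0 < ∑ j : Fin m, ‖z j.succ‖ ^ 2 :=
    Finset.sum_pos' (fun _ _ => by positivity) ⟨j, Finset.mem_univ _, by positivity⟩
  have hz₀ : z 0 + 1 ≠ 0 := by
    intro h
    rw [eq_neg_of_add_eq_zero_left h, norm_neg, norm_one] at hc
    exact hc.false
  refine tendsto_one_div_mul_log_of_tendsto_mul_exp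
    (div_pos (Real.sqrt_pos.mpr hK) (norm_pos_iff.mpr (div_ne_zero hz₀ two_ne_zero))) ?_
  have hlim := tendsto_norm_gT_sub_single_mul_exp
    (tendsto_natCast_atTop_atTop.atTop_mul_const ht) (fun n => pow_mem hU n) hc.le hz₀
  simp_rw [gT_iterate t U hc.le]
  exact hlim

/-- For `t > 0`, `U` unitary, and `z = (c, z')` in the closed unit ball with
`|c| < 1` and `z' ≠ 0`, one has `lim_{n→∞} (1/n) log ‖gⁿ(z) − e₁‖ = −t`. -/
theorem stmt7 {m : ℕ} (t : ℝ) (ht : 0 < t)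
    (U : Matrix (Fin m) (Fin m) ℂ) (hU : U ∈ Matrix.unitaryGroup (Fin m) ℂ)
    (z : EuclideanSpace ℂ (Fin (m+1))) (hz : ‖z‖ ≤ 1)
    (hc : ‖z 0‖ < 1) (hz' : ∃ j : Fin m, z j.succ ≠ 0) :
    Tendsto (fun n : ℕ => (1 / (n : ℝ)) *
        Real.log ‖(gT t U)^[n] z - EuclideanSpace.single 0 (1 : ℂ)‖)
      atTop (nhds (-t)) :=
  stmt7_general t ht U hU z hc hz'
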